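/- For valued-set tableaux of a single row shape (λ = (k)), every tableau is determined by its entry value sequence and group partition, and the connected crystal components are as follows: the set of valued-set tableaux of shape (k) with exactly m groups and entries at most n is in weight-preserving bijection with pairs consisting of a semistandard row of length m (an element of B(mΛ_1)) and a choice of group sizes summing to k, i.e., a composition of k into m positive parts; in particular there are C(k−1, m−1) connected components each isomorphic to B(mΛ_1). -/

import Mathlib

/-- Scanning left to right (`+` for letter `i`, `-` for `i+1`, canceling ordered pairs
`-+`), returns (number of uncanceled `+`, number of uncanceled `-`). -/
def sigFold (i : ℕ) (w : List ℕ) : ℕ × ℕ :=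
  w.foldl (fun pm a =>
    if a = i then (if 0 < pm.2 then (pm.1, pm.2 - 1) else (pm.1 + 1, pm.2))
    else if a = i + 1 then (pm.1, pm.2 + 1) else pm) (0, 0)

/-- Position of the rightmost uncanceled `+` (a letter `i`). -/
def fPos (i : ℕ) (w : List ℕ) : Option ℕ :=
  ((List.range w.length).filter
    (fun j => decide (w[j]? = some i ∧ (sigFold i (w.take j)).2 = 0))).getLast?

/-- Position of the leftmost uncanceled `-` (a letter `i+1`). -/
def ePos (i : ℕ) (w : List ℕ) : Option ℕ :=
  ((List.range w.length).filter
    (fun j => decide (w[j]? = some (i + 1) ∧ (sigFold i (w.drop (j + 1))).1 = 0))).head?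

/-- `sh` is a partition: weakly decreasing list of positive integers. -/
def IsPartition (sh : List ℕ) : Prop :=
  sh.Pairwise (· ≥ ·) ∧ ∀ x ∈ sh, 0 < x

/-- The box in row `r`, column `c` (both 0-indexed) belongs to the Young diagram of `sh`. -/
abbrev InShape (sh : List ℕ) (r c : ℕ) : Prop := c < sh.getD r 0

/-- Number of boxes in column `c` of the shape `sh`. -/
def colHeight (sh : List ℕ) (c : ℕ) : ℕ := (sh.filter (fun p => decide (c < p))).length

/-- The crystal operator `f_i` on words. -/
def fWord (i : ℕ) (w : List ℕ) : Option (List ℕ) :=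
  (fPos i w).map (fun j => w.set j (i + 1))

/-! Valued-set tableaux. -/

/-- A semistandard Young tableau with each row partitioned into contiguous groups:
`entry` gives the entries, and `start r c = true` marks that box `(r, c)` is the
leftmost box (the buoy) of its group. -/
structure VST where
  entry : ℕ → ℕ → ℕ
  start : ℕ → ℕ → Bool

/-- A valued-set tableau of shape `sh` with entries in `{1, …, n}`: a semistandard Young
tableau of shape `sh` whose rows are split into contiguous groups of equal entries. -/
def IsVST (n : ℕ) (sh : List ℕ) (T : VST) : Prop :=
  (∀ r c, ¬ InShape sh r c → T.entry r c = 0 ∧ T.start r c = false) ∧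
  (∀ r c, InShape sh r c → 1 ≤ T.entry r c ∧ T.entry r c ≤ n) ∧
  (∀ r c, InShape sh r (c + 1) → T.entry r c ≤ T.entry r (c + 1)) ∧
  (∀ r c, InShape sh (r + 1) c → T.entry r c < T.entry (r + 1) c) ∧
  (∀ r, InShape sh r 0 → T.start r 0 = true) ∧
  (∀ r c, InShape sh r (c + 1) → T.start r (c + 1) = false →
    T.entry r (c + 1) = T.entry r c)

/-- Tagged buoy reading word: the buoy entries, columns left to right, bottom to top
within each column; each letter is tagged with its box. -/
def vstTagged (sh : List ℕ) (T : VST) : List (ℕ × ℕ × ℕ) :=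
  ((List.range (sh.headD 0)).map (fun c =>
    (List.range (colHeight sh c)).reverse.filterMap (fun r =>
      if T.start r c then some (T.entry r c, r, c) else none))).flatten

/-- The (buoy) reading word of a valued-set tableau. -/
def vstWord (sh : List ℕ) (T : VST) : List ℕ := (vstTagged sh T).map (·.1)

/-- The column of the anchor (rightmost box) of the group whose buoy is in box `(r, c)`. -/
def anchorCol (sh : List ℕ) (T : VST) (r c : ℕ) : ℕ :=
  (((List.range (sh.getD r 0)).filter (fun c' =>
    decide (c ≤ c' ∧ (¬ InShape sh r (c' + 1) ∨ T.start r (c' + 1) = true)))).headD c)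

/-- The crystal operator `f_i` on valued-set tableaux, acting on the group `g` of the
rightmost uncanceled `+`: if the entry immediately below the anchor of `g` is an `i+1`,
move the divider between `g` and the group immediately to the left of `g` one step down;
otherwise change every `i` in `g` to an `i+1`. -/
def vstF (sh : List ℕ) (i : ℕ) (T : VST) : Option VST :=
  (fPos i (vstWord sh T)).map (fun j =>
    let t := (vstTagged sh T).getD j (0, 0, 0)
    let r := t.2.1
    let cs := t.2.2
    let ce := anchorCol sh T r cs
    if InShape sh (r + 1) ce ∧ T.entry (r + 1) ce = i + 1 then
      { T with start := fun r' c' =>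
          if r' = r ∧ c' = cs then false
          else if r' = r + 1 ∧ c' = cs then true
          else T.start r' c' }
    else
      { T with entry := fun r' c' =>
          if r' = r ∧ cs ≤ c' ∧ c' ≤ ce then i + 1 else T.entry r' c' })

/-- The crystal operator `e_i` on valued-set tableaux, acting on the group `g` of the
leftmost uncanceled `-`: if the entry immediately above the anchor of `g` is an `i`,
move the divider between `g` and the group immediately to the left of `g` one step up;
otherwise change every `i+1` in `g` to an `i`. -/
def vstE (sh : List ℕ) (i : ℕ) (T : VST) : Option VST :=
  (ePos i (vstWord sh T)).map (fun j =>
    let t := (vstTagged sh T).getD j (0, 0, 0)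
    let r := t.2.1
    let cs := t.2.2
    let ce := anchorCol sh T r cs
    if 0 < r ∧ T.entry (r - 1) ce = i then
      { T with start := fun r' c' =>
          if r' = r ∧ c' = cs then false
          else if r' + 1 = r ∧ c' = cs then true
          else T.start r' c' }
    else
      { T with entry := fun r' c' =>
          if r' = r ∧ cs ≤ c' ∧ c' ≤ ce then i else T.entry r' c' })

/-- A valued-set tableau is highest weight if it is killed by all raising operators. -/
def VstHW (sh : List ℕ) (T : VST) : Prop := ∀ i, 1 ≤ i → vstE sh i T = none

/-- The columns of the buoys of a single-row valued-set tableau of shape `(k)`. -/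
def buoyCols (k : ℕ) (T : VST) : List ℕ :=
  (List.range k).filter (fun c => T.start 0 c)

/-- The sizes of the groups of a single-row valued-set tableau of shape `(k)`, as a
composition of `k`. -/
def groupSizes (k : ℕ) (T : VST) : List ℕ :=
  (List.range (buoyCols k T).length).map
    (fun j => (buoyCols k T).getD (j + 1) k - (buoyCols k T).getD j 0)

/-!
A single-row valued-set tableau is a weakly increasing row cut into groups, so it is the same
thing as its buoy word (one letter per group, weakly increasing) together with the sizes of its
groups (a composition of `k`). In a single row there is no box below a group, so `f_i` never
moves a divider: it recolours one group, which changes exactly the letter of the word chosen by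
the signature rule and keeps the group sizes. The compositions of `k` into `m` parts correspond
to the `(m - 1)`-subsets of the `k - 1` inner cut points.
-/

namespace List

/-- The sizes of the blocks into which the sorted cut points `L`, starting with `0`, divide
`0, …, k - 1`. -/
def gaps (L : List ℕ) (k : ℕ) : List ℕ :=
  (List.range L.length).map (fun j => L.getD (j + 1) k - L.getD j 0)

variable {L : List ℕ} {k : ℕ}

theorem getD_lt_getD_of_pairwise_lt (hL : L.Pairwise (· < ·)) (hk : ∀ x ∈ L, x < k)
    {i j : ℕ} (hij : i < j) (hi : i < L.length) : L.getD i k < L.getD j k := by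
  rw [getD_eq_getElem _ _ hi]
  by_cases hj : j < L.length
  · rw [getD_eq_getElem _ _ hj]
    exact pairwise_iff_getElem.1 hL i j hi hj hij
  · rw [getD_eq_default _ _ (by omega)]
    exact hk _ (getElem_mem hi)

theorem getElem_gaps {j : ℕ} (hj : j < (gaps L k).length) :
    (gaps L k)[j] = L.getD (j + 1) k - L.getD j k := by
  have hj' : j < L.length := by simpa [gaps] using hj
  simp only [gaps, getElem_map, getElem_range]
  rw [getD_eq_getElem _ _ hj', getD_eq_getElem _ _ hj']

theorem gaps_pos (hL : L.Pairwise (· < ·)) (hk : ∀ x ∈ L, x < k) : ∀ x ∈ gaps L k, 0 < x := by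
  intro x hx
  obtain ⟨j, hj, rfl⟩ := getElem_of_mem hx
  have hj' : j < L.length := by simpa [gaps] using hj
  rw [getElem_gaps]
  have := getD_lt_getD_of_pairwise_lt hL hk (Nat.lt_add_one j) hj'
  omega

theorem sum_take_gaps (hL : L.Pairwise (· < ·)) (hk : ∀ x ∈ L, x < k) (h0 : 0 ∈ L) :
    ∀ j ≤ L.length, ((gaps L k).take j).sum = L.getD j k := by
  have hne : 0 < L.length := length_pos_of_mem h0
  intro j hj
  induction j with
  | zero =>
    obtain ⟨i, hi, hi0⟩ := getElem_of_mem h0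
    rw [take_zero, sum_nil, getD_eq_getElem _ _ hne]
    rcases Nat.eq_zero_or_pos i with rfl | hipos
    · exact hi0.symm
    · have := pairwise_iff_getElem.1 hL 0 i hne hi hipos
      omega
  | succ j ih =>
    have hjg : j < (gaps L k).length := by simpa [gaps] using hj
    rw [sum_take_succ _ _ hjg, ih (by omega), getElem_gaps]
    have := getD_lt_getD_of_pairwise_lt hL hk (Nat.lt_add_one j) (by omega)
    omega

theorem sum_gaps (hL : L.Pairwise (· < ·)) (hk : ∀ x ∈ L, x < k) (h0 : 0 ∈ L) :
    (gaps L k).sum = k := by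
  have := sum_take_gaps hL hk h0 L.length le_rfl
  rwa [take_of_length_le (by simp [gaps]), getD_eq_default _ _ le_rfl] at this

theorem eq_map_sum_take_gaps (hL : L.Pairwise (· < ·)) (hk : ∀ x ∈ L, x < k) (h0 : 0 ∈ L) :
    L = (List.range (gaps L k).length).map (fun j => ((gaps L k).take j).sum) := by
  apply ext_getElem (by simp [gaps])
  intro j hj _
  rw [getElem_map, getElem_range, sum_take_gaps hL hk h0 j hj.le, getD_eq_getElem _ _ hj]

end List

namespace Composition

variable {k : ℕ} (c : Composition k)

/-- The first columns of the blocks of `c`, when `c` cuts the row `0, …, k - 1` into blocks. -/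
def blockStarts : List ℕ := (List.range c.length).map c.sizeUpTo

/-- The block of `c` containing the column `x`. -/
def blockIndex (x : ℕ) : ℕ := Nat.findGreatest (fun j => c.sizeUpTo j ≤ x) (c.length - 1)

variable {c}

theorem sizeUpTo_lt_sizeUpTo {i j : ℕ} (hij : i < j) (hj : j ≤ c.length) :
    c.sizeUpTo i < c.sizeUpTo j :=
  (c.sizeUpTo_strict_mono (by omega)).trans_le (c.monotone_sizeUpTo hij)

theorem sizeUpTo_lt {j : ℕ} (hj : j < c.length) : c.sizeUpTo j < k := by
  simpa [c.sizeUpTo_length] using sizeUpTo_lt_sizeUpTo hj le_rfl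

theorem lt_of_mem_blockStarts {x : ℕ} (hx : x ∈ c.blockStarts) : x < k := by
  obtain ⟨j, hj, rfl⟩ := List.mem_map.1 hx
  exact sizeUpTo_lt (List.mem_range.1 hj)

theorem blockStarts_pairwise_lt : c.blockStarts.Pairwise (· < ·) := by
  rw [blockStarts, List.pairwise_map]
  exact List.pairwise_lt_range.imp_of_mem fun _ hj hij =>
    sizeUpTo_lt_sizeUpTo hij (List.mem_range.1 hj).le

theorem zero_mem_blockStarts (hk : 0 < k) : 0 ∈ c.blockStarts :=
  List.mem_map.2 ⟨0, List.mem_range.2 (c.length_pos_iff.2 hk), c.sizeUpTo_zero⟩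

theorem blockIndex_lt_length (hk : 0 < k) (x : ℕ) : c.blockIndex x < c.length := by
  have := c.length_pos_iff.2 hk
  have := Nat.findGreatest_le (P := fun j => c.sizeUpTo j ≤ x) (c.length - 1)
  unfold blockIndex
  omega

theorem blockIndex_mono : Monotone c.blockIndex := fun _ _ hxy =>
  Nat.findGreatest_mono_left (fun _ hj => hj.trans hxy) _

theorem blockIndex_sizeUpTo {j : ℕ} (hj : j < c.length) : c.blockIndex (c.sizeUpTo j) = j := by
  refine Nat.findGreatest_eq_iff.2 ⟨by omega, fun _ => le_rfl, fun i hji hi => ?_⟩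
  exact (sizeUpTo_lt_sizeUpTo hji (by omega)).not_ge

theorem blockIndex_succ {x : ℕ} (hx : x + 1 < k) (hstart : x + 1 ∉ c.blockStarts) :
    c.blockIndex (x + 1) = c.blockIndex x := by
  have hne : ∀ j, c.sizeUpTo j ≠ x + 1 := by
    intro j hj
    rcases Nat.lt_or_ge j c.length with hjl | hjl
    · exact hstart (List.mem_map.2 ⟨j, List.mem_range.2 hjl, hj⟩)
    · rw [c.sizeUpTo_ofLength_le j hjl] at hj
      omega
  unfold blockIndex
  congr 1
  funext j
  have := hne j
  apply propext
  omega

theorem gaps_blockStarts : c.blockStarts.gaps k = c.blocks := by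
  apply List.ext_getElem (by simp [List.gaps, blockStarts])
  intro j hj _
  have hjl : j < c.length := by simpa [List.gaps, blockStarts] using hj
  have hnext : c.blockStarts.getD (j + 1) k = c.sizeUpTo (j + 1) := by
    rcases Nat.lt_or_ge (j + 1) c.length with h | h
    · rw [List.getD_eq_getElem _ _ (by simpa [blockStarts] using h)]
      simp [blockStarts]
    · rw [List.getD_eq_default _ _ (by simpa [blockStarts] using h), c.sizeUpTo_ofLength_le _ h]
  rw [List.getElem_gaps, hnext, List.getD_eq_getElem _ _ (by simpa [blockStarts] using hjl)]
  simp [blockStarts, c.sizeUpTo_succ hjl]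

end Composition

theorem CompositionAsSet.card_compositionAsSetEquiv {n : ℕ} (hn : 0 < n)
    (c : CompositionAsSet n) : (compositionAsSetEquiv n c).card = c.length - 1 := by
  let shift : Fin (n - 1) ↪ Fin (n + 1) :=
    ⟨fun i => ⟨1 + i, by omega⟩, fun i j h => Fin.ext (by simpa using h)⟩
  have hmap : (compositionAsSetEquiv n c).map shift = c.boundaries \ {0, Fin.last n} := by
    ext j
    simp only [compositionAsSetEquiv, Equiv.coe_fn_mk, Set.toFinset_ofPred, Finset.mem_map,
      Finset.mem_filter_univ, Finset.mem_sdiff, Finset.mem_insert, Finset.mem_singleton]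
    constructor
    · rintro ⟨i, hi, rfl⟩
      have hval : ((shift i : Fin (n + 1)) : ℕ) = 1 + i := rfl
      refine ⟨hi, ?_⟩
      simp only [Fin.ext_iff, Fin.val_zero, Fin.val_last, hval]
      omega
    · rintro ⟨hj, hj0⟩
      simp only [Fin.ext_iff, Fin.val_zero, Fin.val_last, not_or] at hj0
      have hj' : j = ⟨1 + (j - 1 : ℕ), by omega⟩ := Fin.ext (by simp; omega)
      exact ⟨⟨j - 1, by omega⟩, hj' ▸ hj, hj'.symm⟩
  have hsub : ({0, Fin.last n} : Finset (Fin (n + 1))) ⊆ c.boundaries := by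
    simp [Finset.insert_subset_iff]
  have hne : (0 : Fin (n + 1)) ≠ Fin.last n := by simp [Fin.ext_iff]; omega
  rw [← Finset.card_map shift, hmap, Finset.card_sdiff_of_subset hsub, Finset.card_pair hne,
    c.card_boundaries_eq_succ_length]
  omega

theorem Composition.ncard_setOf_length_eq {n m : ℕ} (hn : 0 < n) (hm : 0 < m) :
    {c : Composition n | c.length = m}.ncard = (n - 1).choose (m - 1) := by
  let e := (compositionEquiv n).trans (compositionAsSetEquiv n)
  have hcard : ∀ c, (e c).card = c.length - 1 := fun c => by
    simp [e, compositionEquiv, CompositionAsSet.card_compositionAsSetEquiv hn,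
      Composition.toCompositionAsSet_length]
  have hpos : ∀ c : Composition n, 0 < c.length := fun c => c.length_pos_iff.2 hn
  have himage : e '' {c | c.length = m} =
      ↑((Finset.univ : Finset (Fin (n - 1))).powersetCard (m - 1)) := by
    ext s
    simp only [Set.mem_image, Set.mem_ofPred_eq, Finset.mem_coe, Finset.mem_powersetCard_univ]
    constructor
    · rintro ⟨c, rfl, rfl⟩
      exact hcard c
    · intro hs
      refine ⟨e.symm s, ?_, e.apply_symm_apply s⟩
      have := hcard (e.symm s)
      rw [e.apply_symm_apply] at this
      have := hpos (e.symm s)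
      omega
  rw [← Set.ncard_image_of_injective _ e.injective, himage, Set.ncard_coe_finset,
    Finset.card_powersetCard, Finset.card_univ, Fintype.card_fin]

theorem ncard_setOf_composition_list {k m : ℕ} (hk : 0 < k) (hm : 0 < m) :
    {l : List ℕ | l.length = m ∧ (∀ x ∈ l, 0 < x) ∧ l.sum = k}.ncard = (k - 1).choose (m - 1) := by
  have himage : {l : List ℕ | l.length = m ∧ (∀ x ∈ l, 0 < x) ∧ l.sum = k} =
      Composition.blocks '' {c : Composition k | c.length = m} := by
    ext l
    refine ⟨fun ⟨hl, hpos, hsum⟩ => ⟨⟨l, hpos _, hsum⟩, hl, rfl⟩, ?_⟩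
    rintro ⟨c, hc, rfl⟩
    exact ⟨hc, fun _ => c.blocks_pos, c.blocks_sum⟩
  rw [himage, Set.ncard_image_of_injective _ fun _ _ => Composition.ext,
    Composition.ncard_setOf_length_eq hk hm]

theorem inShape_singleton_iff {k r c : ℕ} : InShape [k] r c ↔ r = 0 ∧ c < k := by
  rcases r with _ | r <;> simp [InShape]

theorem mem_buoyCols {k c : ℕ} {T : VST} : c ∈ buoyCols k T ↔ c < k ∧ T.start 0 c = true := by
  simp [buoyCols]

theorem buoyCols_pairwise_lt (k : ℕ) (T : VST) : (buoyCols k T).Pairwise (· < ·) :=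
  List.pairwise_lt_range.filter _

theorem vstTagged_singleton (k : ℕ) (T : VST) :
    vstTagged [k] T = (buoyCols k T).map (fun c => (T.entry 0 c, 0, c)) := by
  have hcol : ∀ c ∈ List.range k, (List.range (colHeight [k] c)).reverse.filterMap
      (fun r => if T.start r c then some (T.entry r c, r, c) else none) =
      if T.start 0 c then [(T.entry 0 c, 0, c)] else [] := by
    intro c hc
    have : colHeight [k] c = 1 := by simp [colHeight, List.mem_range.1 hc]
    rw [this]
    split <;> simp_all
  rw [vstTagged, List.headD_cons, List.map_congr_left hcol, buoyCols]
  induction List.range k with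
  | nil => rfl
  | cons c l ih => by_cases h : T.start 0 c <;> simp [h, ih]

theorem vstWord_singleton (k : ℕ) (T : VST) :
    vstWord [k] T = (buoyCols k T).map (T.entry 0) := by
  rw [vstWord, vstTagged_singleton, List.map_map]
  rfl

theorem groupSizes_eq_gaps (k : ℕ) (T : VST) : groupSizes k T = (buoyCols k T).gaps k := rfl

theorem VST.ext {T₁ T₂ : VST} (hentry : T₁.entry = T₂.entry) (hstart : T₁.start = T₂.start) :
    T₁ = T₂ := by
  cases T₁; cases T₂; congr

theorem length_groupSizes (k : ℕ) (T : VST) :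
    (groupSizes k T).length = (vstWord [k] T).length := by
  simp [groupSizes, vstWord_singleton]

theorem groupSizes_pos (k : ℕ) (T : VST) : ∀ x ∈ groupSizes k T, 0 < x :=
  List.gaps_pos (buoyCols_pairwise_lt k T) fun _ hc => (mem_buoyCols.1 hc).1

namespace IsVST

variable {n k : ℕ} {T : VST}

theorem zero_mem_buoyCols (hT : IsVST n [k] T) (hk : 0 < k) : 0 ∈ buoyCols k T :=
  mem_buoyCols.2 ⟨hk, hT.2.2.2.2.1 0 (inShape_singleton_iff.2 ⟨rfl, hk⟩)⟩

theorem entry_mono (hT : IsVST n [k] T) {c d : ℕ} (hcd : c ≤ d) (hd : d < k) :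
    T.entry 0 c ≤ T.entry 0 d := by
  induction d, hcd using Nat.le_induction with
  | base => exact le_rfl
  | succ d _ ih => exact (ih (by omega)).trans (hT.2.2.1 0 d (inShape_singleton_iff.2 ⟨rfl, hd⟩))

theorem vstWord_pairwise_le (hT : IsVST n [k] T) : (vstWord [k] T).Pairwise (· ≤ ·) := by
  rw [vstWord_singleton, List.pairwise_map]
  refine (buoyCols_pairwise_lt k T).imp_of_mem fun hc hd hcd => ?_
  exact hT.entry_mono hcd.le (mem_buoyCols.1 hd).1

theorem vstWord_bounds (hT : IsVST n [k] T) : ∀ x ∈ vstWord [k] T, 1 ≤ x ∧ x ≤ n := by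
  rw [vstWord_singleton, List.forall_mem_map]
  exact fun c hc => hT.2.1 0 c (inShape_singleton_iff.2 ⟨rfl, (mem_buoyCols.1 hc).1⟩)

theorem groupSizes_sum (hT : IsVST n [k] T) (hk : 0 < k) : (groupSizes k T).sum = k :=
  List.sum_gaps (buoyCols_pairwise_lt k T) (fun _ hc => (mem_buoyCols.1 hc).1)
    (hT.zero_mem_buoyCols hk)

theorem buoyCols_eq_map_sum_take (hT : IsVST n [k] T) (hk : 0 < k) :
    buoyCols k T = (List.range (groupSizes k T).length).map
      (fun j => ((groupSizes k T).take j).sum) :=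
  List.eq_map_sum_take_gaps (buoyCols_pairwise_lt k T) (fun _ hc => (mem_buoyCols.1 hc).1)
    (hT.zero_mem_buoyCols hk)

variable {T₁ T₂ : VST}

theorem start_eq_of_buoyCols_eq (hT₁ : IsVST n [k] T₁) (hT₂ : IsVST n [k] T₂)
    (hcols : buoyCols k T₁ = buoyCols k T₂) : T₁.start = T₂.start := by
  funext r c
  by_cases hin : InShape [k] r c
  · obtain ⟨rfl, hc⟩ := inShape_singleton_iff.1 hin
    have := congrArg (c ∈ ·) hcols
    simp only [mem_buoyCols, hc, true_and, eq_iff_iff] at this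
    exact Bool.eq_iff_iff.2 this
  · rw [(hT₁.1 r c hin).2, (hT₂.1 r c hin).2]

/-- Every box that is not a buoy repeats the entry to its left. -/
theorem eq_of_buoyCols_eq (hT₁ : IsVST n [k] T₁) (hT₂ : IsVST n [k] T₂)
    (hcols : buoyCols k T₁ = buoyCols k T₂)
    (hbuoy : ∀ c ∈ buoyCols k T₁, T₁.entry 0 c = T₂.entry 0 c) : T₁ = T₂ := by
  have hstart := start_eq_of_buoyCols_eq hT₁ hT₂ hcols
  have hrow : ∀ c < k, T₁.entry 0 c = T₂.entry 0 c := by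
    intro c hc
    induction c with
    | zero => exact hbuoy 0 (hT₁.zero_mem_buoyCols hc)
    | succ c ih =>
      by_cases hs : T₁.start 0 (c + 1)
      · exact hbuoy _ (mem_buoyCols.2 ⟨hc, hs⟩)
      · have hin := inShape_singleton_iff.2 ⟨rfl, hc⟩
        rw [Bool.not_eq_true] at hs
        rw [hT₁.2.2.2.2.2 0 c hin hs, hT₂.2.2.2.2.2 0 c hin (hstart ▸ hs), ih (by omega)]
  refine VST.ext (funext fun r => funext fun c => ?_) hstart
  by_cases hin : InShape [k] r c
  · obtain ⟨rfl, hc⟩ := inShape_singleton_iff.1 hin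
    exact hrow c hc
  · rw [(hT₁.1 r c hin).1, (hT₂.1 r c hin).1]

theorem eq_of_vstWord_eq_of_groupSizes_eq (hk : 0 < k) (hT₁ : IsVST n [k] T₁)
    (hT₂ : IsVST n [k] T₂) (hword : vstWord [k] T₁ = vstWord [k] T₂)
    (hsizes : groupSizes k T₁ = groupSizes k T₂) : T₁ = T₂ := by
  have hcols : buoyCols k T₁ = buoyCols k T₂ := by
    rw [hT₁.buoyCols_eq_map_sum_take hk, hT₂.buoyCols_eq_map_sum_take hk, hsizes]
  rw [vstWord_singleton, vstWord_singleton, ← hcols] at hword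
  exact eq_of_buoyCols_eq hT₁ hT₂ hcols (List.map_inj_left.1 hword)

end IsVST

/-- Inverse of `T ↦ (vstWord [k] T, groupSizes k T)`: the `j`-th block of `c` becomes a group
filled with `w[j]`. -/
def singleRowVST {k : ℕ} (w : List ℕ) (c : Composition k) : VST where
  entry r x := if r = 0 ∧ x < k then w.getD (c.blockIndex x) 0 else 0
  start r x := decide (r = 0 ∧ x ∈ c.blockStarts)

section singleRowVST

variable {k : ℕ} {w : List ℕ} {c : Composition k}

theorem buoyCols_singleRowVST : buoyCols k (singleRowVST w c) = c.blockStarts := by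
  refine (buoyCols_pairwise_lt k _).eq_of_mem_iff Composition.blockStarts_pairwise_lt fun x => ?_
  simp only [mem_buoyCols, singleRowVST, true_and, decide_eq_true_eq]
  exact ⟨And.right, fun hx => ⟨Composition.lt_of_mem_blockStarts hx, hx⟩⟩

theorem vstWord_singleRowVST (hw : w.length = c.length) : vstWord [k] (singleRowVST w c) = w := by
  rw [vstWord_singleton, buoyCols_singleRowVST]
  apply List.ext_getElem (by simp [Composition.blockStarts, hw])
  intro j hj _
  have hjl : j < c.length := by simpa [Composition.blockStarts] using hj
  simp only [Composition.blockStarts, List.getElem_map, List.getElem_range, singleRowVST,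
    Composition.sizeUpTo_lt hjl, and_self, if_true, Composition.blockIndex_sizeUpTo hjl]
  exact List.getD_eq_getElem _ _ _

theorem groupSizes_singleRowVST : groupSizes k (singleRowVST w c) = c.blocks := by
  rw [groupSizes_eq_gaps, buoyCols_singleRowVST, Composition.gaps_blockStarts]

theorem isVST_singleRowVST {n : ℕ} (hsorted : w.Pairwise (· ≤ ·)) (hw : w.length = c.length)
    (hbound : ∀ x ∈ w, 1 ≤ x ∧ x ≤ n) : IsVST n [k] (singleRowVST w c) := by
  have hentry : ∀ x (hx : x < k), (singleRowVST w c).entry 0 x =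
      w[c.blockIndex x]'(hw ▸ c.blockIndex_lt_length (Nat.zero_lt_of_lt hx) x) := by
    intro x hx
    simp only [singleRowVST, hx, and_self, if_true]
    exact List.getD_eq_getElem _ _ _
  refine ⟨fun r x hin => ?_, fun r x hin => ?_, fun r x hin => ?_, fun r x hin => ?_,
    fun r hin => ?_, fun r x hin hstart => ?_⟩
  · rw [inShape_singleton_iff] at hin
    simp only [singleRowVST, if_neg hin, decide_eq_false_iff_not, true_and]
    exact fun h => hin ⟨h.1, Composition.lt_of_mem_blockStarts h.2⟩
  · obtain ⟨rfl, hx⟩ := inShape_singleton_iff.1 hin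
    rw [hentry x hx]
    exact hbound _ (List.getElem_mem _)
  · obtain ⟨rfl, hx⟩ := inShape_singleton_iff.1 hin
    rw [hentry x (by omega), hentry (x + 1) hx]
    exact hsorted.rel_get_of_le (c.blockIndex_mono (Nat.le_succ x))
  · exact absurd (inShape_singleton_iff.1 hin).1 (Nat.succ_ne_zero r)
  · obtain ⟨rfl, hk⟩ := inShape_singleton_iff.1 hin
    simpa [singleRowVST] using Composition.zero_mem_blockStarts hk
  · obtain ⟨rfl, hx⟩ := inShape_singleton_iff.1 hin
    have hnot : x + 1 ∉ c.blockStarts := by simpa [singleRowVST] using hstart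
    rw [hentry x (by omega), hentry (x + 1) hx]
    simp only [Composition.blockIndex_succ hx hnot]

end singleRowVST

section anchorCol

variable (sh : List ℕ) (T : VST) (r c : ℕ)

theorem le_anchorCol : c ≤ anchorCol sh T r c := by
  unfold anchorCol
  generalize hL : List.filter _ (List.range _) = L
  rcases L with _ | ⟨a, l⟩
  · exact le_rfl
  · have ha : a ∈ _ := hL ▸ List.mem_cons_self
    exact (of_decide_eq_true (List.mem_filter.1 ha).2).1

variable {sh T r c}

theorem start_eq_false_of_lt_of_le_anchorCol {d : ℕ} (hcd : c < d)
    (hd : d ≤ anchorCol sh T r c) : T.start r d = false := by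
  unfold anchorCol at hd
  generalize hL : List.filter _ (List.range _) = L at hd
  rcases L with _ | ⟨a, l⟩
  · exact absurd hd (by simpa using hcd)
  · have hsorted := hL ▸ List.pairwise_lt_range.filter _
    have ha : a < sh.getD r 0 := List.mem_range.1 (List.mem_filter.1 (hL ▸ List.mem_cons_self)).1
    simp only [List.headD_cons] at hd
    by_contra hstart
    have hprev : d - 1 ∈ a :: l := by
      rw [← hL, List.mem_filter, List.mem_range, decide_eq_true_eq, Nat.sub_add_cancel (by omega)]
      exact ⟨by omega, by omega, Or.inr (Bool.not_eq_false _ ▸ hstart)⟩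
    rcases List.mem_cons.1 hprev with h | h
    · omega
    · have := List.rel_of_pairwise_cons hsorted h
      omega

end anchorCol

theorem lt_length_of_fPos_eq_some {i j : ℕ} {w : List ℕ} (h : fPos i w = some j) :
    j < w.length :=
  List.mem_range.1 (List.mem_filter.1 (List.mem_of_getLast? h)).1

/-- In a single row no box lies below an anchor, so `f_i` recolours the group of the rightmost
uncanceled `+` and leaves the dividers alone. -/
theorem vstF_singleton {k i : ℕ} {T T' : VST} (hF : vstF [k] i T = some T') :
    ∃ j, fPos i (vstWord [k] T) = some j ∧ groupSizes k T' = groupSizes k T ∧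
      vstWord [k] T' = (vstWord [k] T).set j (i + 1) := by
  obtain ⟨j, hj, rfl⟩ := Option.map_eq_some_iff.1 hF
  refine ⟨j, hj, ?_⟩
  have hjlen : j < (buoyCols k T).length := by
    simpa [vstWord_singleton] using lt_length_of_fPos_eq_some hj
  set cs := (buoyCols k T)[j]
  have htag : (vstTagged [k] T).getD j (0, 0, 0) = (T.entry 0 cs, 0, cs) := by
    rw [vstTagged_singleton, List.getD_eq_getElem _ _ (by simpa using hjlen), List.getElem_map]
  have hbelow : ¬ InShape [k] (0 + 1) (anchorCol [k] T 0 cs) := fun h =>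
    Nat.succ_ne_zero 0 (inShape_singleton_iff.1 h).1
  simp only [htag, hbelow, false_and, if_false]
  refine ⟨rfl, ?_⟩
  have hcols : ∀ e, buoyCols k { T with entry := e } = buoyCols k T := fun _ => rfl
  rw [vstWord_singleton, vstWord_singleton, hcols]
  apply List.ext_getElem (by simp)
  intro j' hj' _
  have hj'len : j' < (buoyCols k T).length := by simpa using hj'
  have hsorted := List.pairwise_iff_getElem.1 (buoyCols_pairwise_lt k T)
  have hgroup : cs ≤ (buoyCols k T)[j'] ∧ (buoyCols k T)[j'] ≤ anchorCol [k] T 0 cs ↔ j = j' := by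
    refine ⟨fun ⟨hlo, hhi⟩ => ?_, fun h => ?_⟩
    · by_contra hne
      rcases Nat.lt_or_gt_of_ne hne with hlt | hgt
      · have hbuoy := (mem_buoyCols.1 (List.getElem_mem hj'len)).2
        rw [start_eq_false_of_lt_of_le_anchorCol (hsorted _ _ _ _ hlt) hhi] at hbuoy
        exact Bool.false_ne_true hbuoy
      · exact absurd hlo (not_le.2 (hsorted _ _ _ _ hgt))
    · subst h
      exact ⟨le_rfl, le_anchorCol _ _ _ _⟩
  simp only [List.getElem_map, List.getElem_set, true_and, hgroup]

theorem vst_single_row_components_general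
    (n k m : ℕ) (hk : 0 < k) (hm : 0 < m) :
    (∃ Φ : VST → List ℕ × List ℕ,
      Set.BijOn Φ
        {T | IsVST n [k] T ∧ (vstWord [k] T).length = m}
        {p : List ℕ × List ℕ | p.1.Pairwise (· ≤ ·) ∧ p.1.length = m ∧
          (∀ x ∈ p.1, 1 ≤ x ∧ x ≤ n) ∧
          p.2.length = m ∧ (∀ x ∈ p.2, 0 < x) ∧ p.2.sum = k} ∧
      (∀ T, IsVST n [k] T → (vstWord [k] T).length = m →
        (Φ T).1 = vstWord [k] T ∧ (Φ T).2 = groupSizes k T) ∧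
      (∀ i, 1 ≤ i → ∀ T, IsVST n [k] T → (vstWord [k] T).length = m →
        ∀ T', vstF [k] i T = some T' →
          (Φ T').2 = (Φ T).2 ∧ fWord i (Φ T).1 = some (Φ T').1)) ∧
    Set.ncard {comp : List ℕ | comp.length = m ∧ (∀ x ∈ comp, 0 < x) ∧ comp.sum = k}
      = Nat.choose (k - 1) (m - 1) := by
  refine ⟨⟨fun T => (vstWord [k] T, groupSizes k T), ⟨?_, ?_, ?_⟩, fun _ _ _ => ⟨rfl, rfl⟩, ?_⟩,
    ncard_setOf_composition_list hk hm⟩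
  · rintro T ⟨hT, hlen⟩
    exact ⟨hT.vstWord_pairwise_le, hlen, hT.vstWord_bounds, (length_groupSizes k T).trans hlen,
      groupSizes_pos k T, hT.groupSizes_sum hk⟩
  · rintro T₁ ⟨hT₁, -⟩ T₂ ⟨hT₂, -⟩ h
    exact hT₁.eq_of_vstWord_eq_of_groupSizes_eq hk hT₂ (congrArg Prod.fst h) (congrArg Prod.snd h)
  · rintro ⟨w, blocks⟩ ⟨hsorted, hw, hbound, hlen, hpos, hsum⟩
    let c : Composition k := ⟨blocks, hpos _, hsum⟩
    have hwc : w.length = c.length := hw.trans hlen.symm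
    refine ⟨singleRowVST w c, ⟨isVST_singleRowVST hsorted hwc hbound, ?_⟩, ?_⟩
    · rw [vstWord_singleRowVST hwc, hw]
    · exact Prod.ext (vstWord_singleRowVST hwc) groupSizes_singleRowVST
  · intro i _ T _ _ T' hF
    obtain ⟨j, hj, hsizes, hword⟩ := vstF_singleton hF
    exact ⟨hsizes, by rw [fWord, hj, Option.map_some]; exact congrArg some hword.symm⟩

/-- For the single-row shape `λ = (k)`, the valued-set tableaux with
exactly `m` groups and entries at most `n` are in weight-preserving bijection with pairs
consisting of a weakly increasing word of length `m` in `{1, …, n}` (an element of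
`B(mΛ₁)`) and a composition of `k` into `m` positive parts; the bijection is compatible
with the crystal operators (which fix the composition and act on the word), and there are
`C(k−1, m−1)` compositions, hence `C(k−1, m−1)` connected components, each isomorphic to
`B(mΛ₁)`. -/
theorem vst_single_row_components
    (n k m : ℕ) (hk : 0 < k) (hm : 0 < m) (hmk : m ≤ k) :
    (∃ Φ : VST → List ℕ × List ℕ,
      Set.BijOn Φ
        {T | IsVST n [k] T ∧ (vstWord [k] T).length = m}
        {p : List ℕ × List ℕ | p.1.Pairwise (· ≤ ·) ∧ p.1.length = m ∧
          (∀ x ∈ p.1, 1 ≤ x ∧ x ≤ n) ∧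
          p.2.length = m ∧ (∀ x ∈ p.2, 0 < x) ∧ p.2.sum = k} ∧
      (∀ T, IsVST n [k] T → (vstWord [k] T).length = m →
        (Φ T).1 = vstWord [k] T ∧ (Φ T).2 = groupSizes k T) ∧
      (∀ i, 1 ≤ i → ∀ T, IsVST n [k] T → (vstWord [k] T).length = m →
        ∀ T', vstF [k] i T = some T' →
          (Φ T').2 = (Φ T).2 ∧ fWord i (Φ T).1 = some (Φ T').1)) ∧
    Set.ncard {comp : List ℕ | comp.length = m ∧ (∀ x ∈ comp, 0 < x) ∧ comp.sum = k}
      = Nat.choose (k - 1) (m - 1) :=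
  vst_single_row_components_general n k m hk hm
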